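/- Let q be a complex number with |q| < 1. Then the third order mock theta function f(q) satisfies \sum_{n=0}^{\infty} \frac{q^{n^2}}{[(-q;q)_n]^2} = 2 - \sum_{n=0}^{\infty} (-1)^n \frac{q^n}{(-q;q)_n}. -/

import Mathlib

open scoped BigOperators

/-- The finite q-Pochhammer symbol `(a; q)_n = ∏_{k=0}^{n-1} (1 - a q^k)`. -/
noncomputable def qPoch (a q : ℂ) (n : ℕ) : ℂ :=
  ∏ k ∈ Finset.range n, (1 - a * q ^ k)

/-!
Write `G(a) = fineSeries q a = ∑ aⁿ / (a;q)ₙ`, so that the right-hand series is `G(-q)`. Since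
`(a;q)ₙ₊₁ = (a;q)ₙ (1 - a qⁿ) = (1 - a) (aq;q)ₙ`, comparing `G(a)` with `a G(a)` term by term gives
`(1 - a) G(a) = 1 + a² / (1 - a) · G(aq)`. Applied at `a = -q^{M+1}`, this shows by induction
that the `M`-th partial sum of `f(q)` plus `G(-q)` equals `2` minus a remainder carrying the
factor `q^{M²}`. The products `(a;q)ₙ` stay uniformly away from `0` for `|a| ≤ |q|`, so the
remainder tends to `0`.
-/

open Filter Topology Finset

lemma Real.exp_neg_div_le_one_sub {x ρ : ℝ} (hx : 0 ≤ x) (hxρ : x ≤ ρ) (hρ : ρ < 1) :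
    Real.exp (-(x / (1 - ρ))) ≤ 1 - x := by
  have hx1 : 0 < 1 - x := by linarith
  calc Real.exp (-(x / (1 - ρ))) ≤ Real.exp (-(x / (1 - x))) := by gcongr
    _ = (Real.exp (x / (1 - x)))⁻¹ := Real.exp_neg _
    _ ≤ (x / (1 - x) + 1)⁻¹ := by gcongr; exact Real.add_one_le_exp _
    _ = 1 - x := by field_simp; ring

section QPochhammer

variable {a q : ℂ}

@[simp]
lemma qPoch_zero : qPoch a q 0 = 1 := by simp [qPoch]

lemma qPoch_succ (n : ℕ) : qPoch a q (n + 1) = qPoch a q n * (1 - a * q ^ n) :=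
  prod_range_succ _ n

lemma qPoch_succ' (n : ℕ) : qPoch a q (n + 1) = (1 - a) * qPoch (a * q) q n := by
  simp only [qPoch, prod_range_succ', pow_succ', pow_zero, mul_one, mul_assoc, mul_comm (1 - a)]

lemma exp_neg_le_norm_qPoch {ρ : ℝ} (ha : ‖a‖ ≤ ρ) (hq : ‖q‖ ≤ ρ) (hρ : ρ < 1) (n : ℕ) :
    Real.exp (-(ρ / (1 - ρ) ^ 2)) ≤ ‖qPoch a q n‖ := by
  have hρ0 : 0 ≤ ρ := (norm_nonneg _).trans ha
  have hfactor (k : ℕ) : ‖a * q ^ k‖ ≤ ρ ^ (k + 1) := by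
    rw [norm_mul, norm_pow, pow_succ']
    gcongr
  have hsum : ∑ k ∈ range n, ‖a * q ^ k‖ ≤ ρ / (1 - ρ) :=
    calc ∑ k ∈ range n, ‖a * q ^ k‖ ≤ ∑ k ∈ range n, ρ * ρ ^ k :=
          sum_le_sum fun k _ => (hfactor k).trans_eq (pow_succ' ρ k)
      _ ≤ ρ * (1 / (1 - ρ)) := by
          rw [← mul_sum, range_eq_Ico]
          gcongr
          simpa using geom_sum_Ico_le_of_lt_one (m := 0) hρ0 hρ
      _ = ρ / (1 - ρ) := mul_one_div ρ _
  calc Real.exp (-(ρ / (1 - ρ) ^ 2))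
      ≤ Real.exp (-(∑ k ∈ range n, ‖a * q ^ k‖ / (1 - ρ))) := by
        rw [← sum_div, sq, ← div_div]
        gcongr
    _ = ∏ k ∈ range n, Real.exp (-(‖a * q ^ k‖ / (1 - ρ))) := by
        rw [← Real.exp_sum, sum_neg_distrib]
    _ ≤ ∏ k ∈ range n, ‖1 - a * q ^ k‖ := by
        refine prod_le_prod (fun _ _ => (Real.exp_pos _).le) fun k _ => ?_
        refine (Real.exp_neg_div_le_one_sub (norm_nonneg _) ?_ hρ).trans ?_
        · exact (hfactor k).trans (pow_le_of_le_one hρ0 hρ.le k.succ_ne_zero)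
        · simpa using norm_sub_norm_le (1 : ℂ) (a * q ^ k)
    _ = ‖qPoch a q n‖ := (norm_prod _ _).symm

lemma qPoch_ne_zero (ha : ‖a‖ < 1) (hq : ‖q‖ < 1) (n : ℕ) : qPoch a q n ≠ 0 :=
  norm_pos_iff.mp <| (Real.exp_pos _).trans_le <|
    exp_neg_le_norm_qPoch (le_max_left _ _) (le_max_right _ _) (max_lt ha hq) n

lemma norm_qPoch_inv_le {ρ : ℝ} (ha : ‖a‖ ≤ ρ) (hq : ‖q‖ ≤ ρ) (hρ : ρ < 1) (n : ℕ) :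
    ‖(qPoch a q n)⁻¹‖ ≤ Real.exp (ρ / (1 - ρ) ^ 2) := by
  rw [norm_inv, ← inv_inv (Real.exp _), ← Real.exp_neg]
  exact inv_anti₀ (Real.exp_pos _) (exp_neg_le_norm_qPoch ha hq hρ n)

end QPochhammer

/-- The special case `F(0, a/q; a)` of Fine's function `F(a, b; t) = ∑ (aq;q)ₙ tⁿ / (bq;q)ₙ`. -/
noncomputable def fineSeries (q a : ℂ) : ℂ := ∑' n : ℕ, a ^ n / qPoch a q n

section FineSeries

variable {a q : ℂ}

lemma norm_pow_div_qPoch_le {ρ : ℝ} (ha : ‖a‖ ≤ ρ) (hq : ‖q‖ ≤ ρ) (hρ : ρ < 1) (n : ℕ) :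
    ‖a ^ n / qPoch a q n‖ ≤ ρ ^ n * Real.exp (ρ / (1 - ρ) ^ 2) := by
  have hρ0 : 0 ≤ ρ := (norm_nonneg _).trans ha
  rw [div_eq_mul_inv, norm_mul, norm_pow]
  gcongr
  exact norm_qPoch_inv_le ha hq hρ n

lemma summable_pow_div_qPoch (ha : ‖a‖ < 1) (hq : ‖q‖ < 1) :
    Summable fun n => a ^ n / qPoch a q n := by
  have hρ : max ‖a‖ ‖q‖ < 1 := max_lt ha hq
  exact .of_norm_bounded
    ((summable_geometric_of_lt_one ((norm_nonneg a).trans (le_max_left _ _)) hρ).mul_right _)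
    (norm_pow_div_qPoch_le (le_max_left _ _) (le_max_right _ _) hρ)

lemma norm_fineSeries_le {ρ : ℝ} (ha : ‖a‖ ≤ ρ) (hq : ‖q‖ ≤ ρ) (hρ : ρ < 1) :
    ‖fineSeries q a‖ ≤ Real.exp (ρ / (1 - ρ) ^ 2) / (1 - ρ) := by
  have hgeom := (hasSum_geometric_of_lt_one ((norm_nonneg a).trans ha) hρ).mul_right
    (Real.exp (ρ / (1 - ρ) ^ 2))
  rw [inv_mul_eq_div] at hgeom
  exact tsum_of_norm_bounded hgeom (norm_pow_div_qPoch_le ha hq hρ)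

lemma pow_succ_div_qPoch_succ (ha : ‖a‖ < 1) (hq : ‖q‖ < 1) (n : ℕ) :
    a ^ (n + 1) / qPoch a q (n + 1) =
      a * (a ^ n / qPoch a q n) + a ^ 2 / (1 - a) * ((a * q) ^ n / qPoch (a * q) q n) := by
  have ha1 : 1 - a ≠ 0 := sub_ne_zero.mpr (by rintro rfl; simp at ha)
  have hPsucc := qPoch_ne_zero ha hq (n + 1)
  rw [show qPoch (a * q) q n = qPoch a q (n + 1) / (1 - a) by
    rw [qPoch_succ', mul_div_cancel_left₀ _ ha1]]
  rw [qPoch_succ] at hPsucc ⊢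
  have hP := left_ne_zero_of_mul hPsucc
  have hfactor := right_ne_zero_of_mul hPsucc
  field_simp
  ring

lemma one_sub_mul_fineSeries (ha : ‖a‖ < 1) (hq : ‖q‖ < 1) :
    (1 - a) * fineSeries q a = 1 + a ^ 2 / (1 - a) * fineSeries q (a * q) := by
  have haq : ‖a * q‖ < 1 := by
    rw [norm_mul]
    exact mul_lt_one_of_nonneg_of_lt_one_left (norm_nonneg a) ha hq.le
  have hsplit := (summable_pow_div_qPoch ha hq).tsum_eq_zero_add
  rw [tsum_congr (pow_succ_div_qPoch_succ ha hq),
    ((summable_pow_div_qPoch ha hq).mul_left a).tsum_add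
      ((summable_pow_div_qPoch haq hq).mul_left _),
    tsum_mul_left, tsum_mul_left] at hsplit
  simp only [pow_zero, qPoch_zero, div_one] at hsplit
  unfold fineSeries
  linear_combination hsplit

end FineSeries

noncomputable def mockThetaRemainder (q : ℂ) (M : ℕ) : ℂ :=
  q ^ (M ^ 2) / qPoch (-q) q M ^ 2 * (1 + q ^ M - q ^ M * fineSeries q (-q ^ (M + 1)))

section MockTheta

variable {q : ℂ}

lemma qPoch_neg_self_succ (n : ℕ) :
    qPoch (-q) q (n + 1) = qPoch (-q) q n * (1 + q ^ (n + 1)) := by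
  rw [qPoch_succ]
  ring

lemma one_add_pow_succ_ne_zero (hq : ‖q‖ < 1) (n : ℕ) : 1 + q ^ (n + 1) ≠ 0 := by
  intro h
  have : ‖q ^ (n + 1)‖ = 1 := by rw [eq_neg_of_add_eq_zero_right h, norm_neg, norm_one]
  rw [norm_pow] at this
  exact (pow_lt_one₀ (norm_nonneg q) hq n.succ_ne_zero).ne this

lemma sum_range_add_fineSeries (hq : ‖q‖ < 1) (M : ℕ) :
    ∑ n ∈ range M, q ^ (n ^ 2) / qPoch (-q) q n ^ 2 + fineSeries q (-q) =
      2 - mockThetaRemainder q M := by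
  induction M with
  | zero =>
    simp only [mockThetaRemainder, range_zero, sum_empty, zero_add, pow_one, zero_pow two_ne_zero,
      pow_zero, qPoch_zero]
    ring
  | succ M ih =>
    have hqM : ‖-q ^ (M + 1)‖ < 1 := by
      rw [norm_neg, norm_pow]
      exact pow_lt_one₀ (norm_nonneg q) hq M.succ_ne_zero
    have hP := qPoch_ne_zero (a := -q) (by rwa [norm_neg]) hq M
    have hw := one_add_pow_succ_ne_zero hq M
    have hFE : (1 + q ^ (M + 1)) ^ 2 * fineSeries q (-q ^ (M + 1)) =
        1 + q ^ (M + 1) + (q ^ (M + 1)) ^ 2 * fineSeries q (-q ^ (M + 1 + 1)) := by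
      have h := one_sub_mul_fineSeries hqM hq
      rw [show -q ^ (M + 1) * q = -q ^ (M + 1 + 1) by ring, sub_neg_eq_add, neg_sq] at h
      field_simp at h
      linear_combination h
    rw [mockThetaRemainder] at ih ⊢
    rw [sum_range_succ, qPoch_neg_self_succ, show (M + 1) ^ 2 = M ^ 2 + M + (M + 1) by ring,
      pow_add, pow_add]
    linear_combination (norm := (field_simp; ring))
      ih + q ^ (M ^ 2) * q ^ M / (qPoch (-q) q M ^ 2 * (1 + q ^ (M + 1)) ^ 2) * hFE

lemma norm_pow_sq_div_qPoch_sq_le (hq : ‖q‖ < 1) (n : ℕ) :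
    ‖q ^ (n ^ 2) / qPoch (-q) q n ^ 2‖ ≤ ‖q‖ ^ n * Real.exp (‖q‖ / (1 - ‖q‖) ^ 2) ^ 2 := by
  rw [div_eq_mul_inv, ← inv_pow, norm_mul, norm_pow, norm_pow]
  gcongr ?_ * ?_ ^ 2
  · exact pow_le_pow_of_le_one (norm_nonneg _) hq.le (Nat.le_self_pow two_ne_zero n)
  · exact norm_qPoch_inv_le (norm_neg q).le le_rfl hq n

lemma summable_pow_sq_div_qPoch_sq (hq : ‖q‖ < 1) :
    Summable fun n : ℕ => q ^ (n ^ 2) / qPoch (-q) q n ^ 2 :=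
  .of_norm_bounded ((summable_geometric_of_lt_one (norm_nonneg q) hq).mul_right _)
    (norm_pow_sq_div_qPoch_sq_le hq)

lemma tendsto_mockThetaRemainder (hq : ‖q‖ < 1) :
    Tendsto (mockThetaRemainder q) atTop (𝓝 0) := by
  set E := Real.exp (‖q‖ / (1 - ‖q‖) ^ 2)
  set B := E / (1 - ‖q‖)
  have hbracket (M : ℕ) : ‖1 + q ^ M - q ^ M * fineSeries q (-q ^ (M + 1))‖ ≤ 2 + B := by
    have hqM : ‖q ^ M‖ ≤ 1 := by
      rw [norm_pow]
      exact pow_le_one₀ (norm_nonneg _) hq.le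
    have hG : ‖fineSeries q (-q ^ (M + 1))‖ ≤ B := by
      refine norm_fineSeries_le ?_ le_rfl hq
      rw [norm_neg, norm_pow]
      exact pow_le_of_le_one (norm_nonneg _) hq.le M.succ_ne_zero
    calc _ ≤ ‖(1 : ℂ)‖ + ‖q ^ M‖ + ‖q ^ M‖ * ‖fineSeries q (-q ^ (M + 1))‖ := by
          grw [norm_sub_le, norm_add_le, norm_mul]
      _ ≤ 1 + 1 + 1 * B := by gcongr; simp
      _ = 2 + B := by ring
  have hbound := (tendsto_pow_atTop_nhds_zero_of_lt_one (norm_nonneg q) hq).mul_const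
    (E ^ 2 * (2 + B))
  rw [zero_mul] at hbound
  refine squeeze_zero_norm (fun M => ?_) hbound
  rw [mockThetaRemainder, norm_mul, ← mul_assoc]
  gcongr
  · exact norm_pow_sq_div_qPoch_sq_le hq M
  · exact hbracket M

end MockTheta

theorem f_second_form (q : ℂ) (hq : ‖q‖ < 1) :
    (∑' n : ℕ, q ^ (n ^ 2) / (qPoch (-q) q n) ^ 2) =
      2 - ∑' n : ℕ, (-1) ^ n * q ^ n / qPoch (-q) q n := by
  have hG : ∑' n : ℕ, (-1) ^ n * q ^ n / qPoch (-q) q n = fineSeries q (-q) :=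
    tsum_congr fun n => by rw [neg_pow q]
  have hpartial : Tendsto (fun M => ∑ n ∈ range M, q ^ (n ^ 2) / qPoch (-q) q n ^ 2) atTop
      (𝓝 (2 - fineSeries q (-q))) := by
    have h := ((tendsto_mockThetaRemainder hq).const_sub 2).sub_const (fineSeries q (-q))
    rw [sub_zero] at h
    exact h.congr fun M => by linear_combination -(sum_range_add_fineSeries hq M)
  rw [hG]
  exact tendsto_nhds_unique (summable_pow_sq_div_qPoch_sq hq).hasSum.tendsto_sum_nat hpartial
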